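/- Let q be a real number with q > 0. Then for every n ≥ 0 and every x ∈ ℂ, B_n(x|q) = i^n · q^{n(n−2)/2} · H_n(i·√q·x | 1/q), where i is the imaginary unit and q^{n(n−2)/2} denotes the real power of the positive real number q. -/
import Mathlib


open Finset

noncomputable section

/-- The `q`-integer `[n]_q = 1 + q + ⋯ + q^{n-1}`. -/
def qInt (q : ℂ) (n : ℕ) : ℂ := ∑ i ∈ Finset.range n, q ^ i

/-- The (renormalized) continuous `q`-Hermite polynomials, as functions on `ℂ`:
`H_{-1} = 0`, `H_0 = 1`, `H_{n+1}(x) = x H_n(x) - [n]_q H_{n-1}(x)`. -/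
def qHermite (q : ℂ) : ℕ → ℂ → ℂ
  | 0 => fun _ => 1
  | 1 => fun x => x
  | n + 2 => fun x => x * qHermite q (n + 1) x - qInt q (n + 1) * qHermite q n x

/-- The polynomials `B_n(x|q)`, as functions on `ℂ`:
`B_{-1} = 0`, `B_0 = 1`, `B_{n+1}(x) = -q^n x B_n(x) + q^{n-1} [n]_q B_{n-1}(x)`. -/
def Bpoly (q : ℂ) : ℕ → ℂ → ℂ
  | 0 => fun _ => 1
  | 1 => fun x => -x
  | n + 2 => fun x => -(q ^ (n + 1)) * x * Bpoly q (n + 1) x + q ^ n * qInt q (n + 1) * Bpoly q n x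

private lemma qInt_one_div (q : ℂ) (hq : q ≠ 0) (n : ℕ) :
    qInt (1/q) (n+1) * q ^ n = qInt q (n+1) := by
  unfold qInt
  rw [Finset.sum_mul, ← Finset.sum_range_reflect (fun i => q ^ i) (n+1)]
  refine Finset.sum_congr rfl fun i hi => ?_
  rw [Finset.mem_range] at hi
  rw [one_div, inv_pow]
  rw [inv_mul_eq_iff_eq_mul₀ (pow_ne_zero _ hq), ← pow_add]
  congr 1
  omega

/-- Identity (5), case `q > 0`:
`B_n(x|q) = iⁿ q^{n(n-2)/2} H_n(i √q x | 1/q)`, where `q^{n(n-2)/2}` is the real power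
of the positive real `q`. -/
theorem Bpoly_eq_qHermite_of_pos (q : ℝ) (hq : 0 < q) (n : ℕ) (x : ℂ) :
    Bpoly (q : ℂ) n x =
      Complex.I ^ n * ((q ^ (((n : ℝ) * ((n : ℝ) - 2)) / 2) : ℝ) : ℂ) *
        qHermite (((1 : ℝ) / q : ℝ) : ℂ) n (Complex.I * (Real.sqrt q : ℝ) * x) := by
  have hq0 : (q:ℂ) ≠ 0 := by exact_mod_cast hq.ne'
  induction n using Nat.twoStepInduction with
  | zero =>
      simp [Bpoly, qHermite]
  | one =>
      simp only [Bpoly, qHermite, Nat.cast_one, pow_one]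
      have h2 : ((q ^ (((1:ℝ) * ((1:ℝ) - 2)) / 2) : ℝ) : ℂ) * ((Real.sqrt q : ℝ) : ℂ) = 1 := by
        rw [← Complex.ofReal_mul, Real.sqrt_eq_rpow, ← Real.rpow_add hq]
        norm_num
      have h3 : Complex.I * ((q ^ (((1:ℝ) * ((1:ℝ) - 2)) / 2) : ℝ) : ℂ) *
          (Complex.I * ((Real.sqrt q : ℝ) : ℂ) * x)
          = Complex.I ^ 2 * ((((q ^ (((1:ℝ) * ((1:ℝ) - 2)) / 2) : ℝ) : ℂ)) * ((Real.sqrt q : ℝ) : ℂ)) * x := by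
        ring
      rw [h3, h2, Complex.I_sq]
      ring
  | more n ih1 ih2 =>
      have hcast : (((1:ℝ)/q : ℝ) : ℂ) = 1/(q:ℂ) := by push_cast; ring
      have hK : qInt (1/(q:ℂ)) (n+1) = qInt (q:ℂ) (n+1) * ((q:ℂ)^n)⁻¹ := by
        rw [eq_mul_inv_iff_mul_eq₀ (pow_ne_zero _ hq0)]
        exact qInt_one_div (q:ℂ) hq0 n
      have haR : q ^ ((((n+2 : ℕ) : ℝ)) * (((n+2 : ℕ) : ℝ) - 2) / 2) * Real.sqrt q
          = q ^ (n+1 : ℕ) * q ^ ((((n+1 : ℕ) : ℝ)) * (((n+1 : ℕ) : ℝ) - 2) / 2) := by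
        rw [Real.sqrt_eq_rpow, ← Real.rpow_natCast q (n+1), ← Real.rpow_add hq, ← Real.rpow_add hq]
        congr 1; push_cast; ring
      have hbR : q ^ ((((n+2 : ℕ) : ℝ)) * (((n+2 : ℕ) : ℝ) - 2) / 2) * (q ^ n)⁻¹
          = q ^ n * q ^ (((n : ℝ) * ((n : ℝ) - 2)) / 2) := by
        rw [← Real.rpow_natCast q n, ← Real.rpow_neg hq.le, ← Real.rpow_add hq, ← Real.rpow_add hq]
        congr 1; push_cast; ring
      have haC := congrArg (Complex.ofReal) haR
      have hbC := congrArg (Complex.ofReal) hbR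
      push_cast at haC hbC
      simp only [Bpoly, qHermite]
      rw [ih1, ih2, hcast, hK]
      push_cast
      linear_combination (-(Complex.I^(n+3)) * x *
          qHermite (1/(q:ℂ)) (n+1) (Complex.I * ((Real.sqrt q : ℝ):ℂ) * x)) * haC
        + (Complex.I^(n+2) * qInt (q:ℂ) (n+1) *
          qHermite (1/(q:ℂ)) n (Complex.I * ((Real.sqrt q : ℝ):ℂ) * x)) * hbC
        + (-((q:ℂ)^(n+1)) * x * ((q ^ ((((n : ℝ)+1)) * (((n : ℝ)+1) - 2) / 2) : ℝ) : ℂ) *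
            qHermite (1/(q:ℂ)) (n+1) (Complex.I * ((Real.sqrt q : ℝ):ℂ) * x) * Complex.I^(n+1)
          + (q:ℂ)^n * qInt (q:ℂ) (n+1) * ((q ^ (((n : ℝ) * ((n : ℝ) - 2)) / 2) : ℝ) : ℂ) *
            qHermite (1/(q:ℂ)) n (Complex.I * ((Real.sqrt q : ℝ):ℂ) * x) * Complex.I^n) * Complex.I_sq
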